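/- arXiv:1703.01044 — 4 statements merged into one kernel-verified Lean document; each statement's English description precedes it below -/
import Mathlib

section
/- Let b₀ > 0, a₀ > 0, a₁ > 0, a₂ > 0 and let (λ₁, λ₂) be a random vector with the Beta-Gamma distribution BG(b₀, a₀, a₁, a₂). Then U = λ₁ + λ₂ has the Gamma distribution with shape a₀ and rate b₀ (density (b₀^{a₀}/Γ(a₀)) u^{a₀−1} e^{−b₀ u} for u > 0), V = λ₁/(λ₁ + λ₂) has the Beta distribution with parameters a₁ and a₂ (density (Γ(a₁+a₂)/(Γ(a₁)Γ(a₂))) v^{a₁−1}(1−v)^{a₂−1} for 0 < v < 1), and U and V are independent. Equivalently, the pushforward of the BG(b₀, a₀, a₁, a₂) measure under the map (λ₁, λ₂) ↦ (λ₁ + λ₂, λ₁/(λ₁ + λ₂)) equals the product measure Gamma(a₀, b₀) ⊗ Beta(a₁, a₂). -/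
open MeasureTheory

/-- Joint density of the Beta-Gamma distribution `BG(b₀, a₀, a₁, a₂)` on `(0,∞)²`. -/
noncomputable def bgPdf (b₀ a₀ a₁ a₂ l₁ l₂ : ℝ) : ℝ :=
  if 0 < l₁ ∧ 0 < l₂ then
    Real.Gamma (a₁ + a₂) / Real.Gamma a₀ * (b₀ * (l₁ + l₂)) ^ (a₀ - a₁ - a₂) *
      (b₀ ^ a₁ / Real.Gamma a₁ * l₁ ^ (a₁ - 1) * Real.exp (-b₀ * l₁)) *
      (b₀ ^ a₂ / Real.Gamma a₂ * l₂ ^ (a₂ - 1) * Real.exp (-b₀ * l₂))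
  else 0

/-- The Beta-Gamma distribution `BG(b₀, a₀, a₁, a₂)` as a measure on `ℝ × ℝ`. -/
noncomputable def bgMeasure (b₀ a₀ a₁ a₂ : ℝ) : Measure (ℝ × ℝ) :=
  volume.withDensity fun p => ENNReal.ofReal (bgPdf b₀ a₀ a₁ a₂ p.1 p.2)

/-- Density of the Gamma distribution with shape `a` and rate `r`. -/
noncomputable def gammaPdfShapeRate (a r x : ℝ) : ℝ :=
  if 0 < x then r ^ a / Real.Gamma a * x ^ (a - 1) * Real.exp (-r * x) else 0

/-- Density of the Beta distribution with parameters `a` and `b`. -/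
noncomputable def betaPdf (a b v : ℝ) : ℝ :=
  if 0 < v ∧ v < 1 then
    Real.Gamma (a + b) / (Real.Gamma a * Real.Gamma b) * v ^ (a - 1) * (1 - v) ^ (b - 1)
  else 0

open Set
open scoped ENNReal

/-!
The map `(u, v) ↦ (u v, u (1 - v))` is a diffeomorphism of `(0, ∞) × (0, 1)` onto `(0, ∞)²` with
Jacobian `u`, inverse to `(x, y) ↦ (x + y, x / (x + y))`. By the change of variables formula the
pushforward of `BG(b₀, a₀, a₁, a₂)` therefore has density `u π(u v, u (1 - v))` on
`(0, ∞) × (0, 1)`, and this factors as the `Gamma(a₀, b₀)` density in `u` times the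
`Beta(a₁, a₂)` density in `v`.
-/

lemma MeasureTheory.Measure.map_withDensity_comp {α β : Type*} [MeasurableSpace α]
    [MeasurableSpace β] {Φ : α → β} (hΦ : Measurable Φ) {g : β → ℝ≥0∞} (hg : Measurable g)
    (ρ : Measure α) :
    (ρ.withDensity (g ∘ Φ)).map Φ = (ρ.map Φ).withDensity g := by
  ext t ht
  rw [Measure.map_apply hΦ ht, withDensity_apply _ (hΦ ht), withDensity_apply _ ht,
    setLIntegral_map ht hg hΦ, Function.comp_def]

lemma MeasureTheory.withDensity_eq_restrict_withDensity {α : Type*} [MeasurableSpace α]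
    {μ : Measure α} {s : Set α} (hs : MeasurableSet s) {f : α → ℝ≥0∞}
    (hf : f.support ⊆ s) :
    μ.withDensity f = (μ.restrict s).withDensity f := by
  rw [← withDensity_indicator hs, indicator_eq_self.2 hf]

noncomputable def splitByRatio (p : ℝ × ℝ) : ℝ × ℝ := (p.1 * p.2, p.1 * (1 - p.2))

noncomputable def sumAndRatio (p : ℝ × ℝ) : ℝ × ℝ := (p.1 + p.2, p.1 / (p.1 + p.2))

noncomputable def splitByRatioFDeriv (p : ℝ × ℝ) : ℝ × ℝ →L[ℝ] ℝ × ℝ :=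
  LinearMap.toContinuousLinearMap <|
    Matrix.toLin (Module.Basis.finTwoProd ℝ) (Module.Basis.finTwoProd ℝ)
      !![p.2, p.1; 1 - p.2, -p.1]

lemma measurable_splitByRatio : Measurable splitByRatio := by
  unfold splitByRatio; fun_prop

lemma measurable_sumAndRatio : Measurable sumAndRatio := by
  unfold sumAndRatio; fun_prop

lemma hasFDerivAt_splitByRatio (p : ℝ × ℝ) :
    HasFDerivAt splitByRatio (splitByRatioFDeriv p) p := by
  rw [splitByRatioFDeriv, Matrix.toLin_finTwoProd_toContinuousLinearMap]
  have h₁ : HasFDerivAt (fun q : ℝ × ℝ => q.1 * q.2)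
      (p.1 • ContinuousLinearMap.snd ℝ ℝ ℝ + p.2 • ContinuousLinearMap.fst ℝ ℝ ℝ) p :=
    hasFDerivAt_fst.mul hasFDerivAt_snd
  have h₂ : HasFDerivAt (fun q : ℝ × ℝ => q.1 * (1 - q.2))
      (p.1 • -ContinuousLinearMap.snd ℝ ℝ ℝ + (1 - p.2) • ContinuousLinearMap.fst ℝ ℝ ℝ) p :=
    hasFDerivAt_fst.mul (hasFDerivAt_snd.const_sub 1)
  convert h₁.prodMk h₂ using 2 <;> (try rfl) <;> module

lemma det_splitByRatioFDeriv (p : ℝ × ℝ) : (splitByRatioFDeriv p).det = -p.1 := by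
  simp only [splitByRatioFDeriv, LinearMap.det_toContinuousLinearMap, LinearMap.det_toLin,
    Matrix.det_fin_two_of]
  ring

lemma sumAndRatio_splitByRatio {p : ℝ × ℝ} (hp : p.1 ≠ 0) :
    sumAndRatio (splitByRatio p) = p := by
  have hsum : p.1 * p.2 + p.1 * (1 - p.2) = p.1 := by ring
  simp only [sumAndRatio, splitByRatio, hsum, mul_div_cancel_left₀ _ hp]

lemma injOn_splitByRatio : InjOn splitByRatio (Ioi 0 ×ˢ Ioo 0 1) := fun p hp q hq hpq => by
  rw [← sumAndRatio_splitByRatio (ne_of_gt hp.1), hpq, sumAndRatio_splitByRatio (ne_of_gt hq.1)]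

lemma splitByRatio_image : splitByRatio '' (Ioi 0 ×ˢ Ioo 0 1) = Ioi 0 ×ˢ Ioi 0 := by
  ext q
  constructor
  · rintro ⟨p, ⟨hp₁, hp₂, hp₂'⟩, rfl⟩
    exact ⟨mul_pos hp₁ hp₂, mul_pos hp₁ (sub_pos.2 hp₂')⟩
  · rintro ⟨hq₁, hq₂⟩
    have hsum : 0 < q.1 + q.2 := add_pos hq₁ hq₂
    refine ⟨sumAndRatio q, ⟨hsum, div_pos hq₁ hsum, (div_lt_one hsum).2 (by simpa)⟩, ?_⟩
    simp only [splitByRatio, sumAndRatio]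
    ext <;> field_simp; ring

lemma map_splitByRatio_withDensity :
    ((volume.restrict (Ioi 0 ×ˢ Ioo 0 1)).withDensity fun p : ℝ × ℝ => ENNReal.ofReal p.1).map
      splitByRatio = volume.restrict (Ioi 0 ×ˢ Ioi 0) := by
  have hB : MeasurableSet (Ioi (0 : ℝ) ×ˢ Ioo (0 : ℝ) 1) := measurableSet_Ioi.prod measurableSet_Ioo
  have hdet : ∀ᵐ p ∂volume.restrict (Ioi 0 ×ˢ Ioo 0 1),
      ENNReal.ofReal p.1 = ENNReal.ofReal |(splitByRatioFDeriv p).det| :=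
    (ae_restrict_iff' hB).2 <| ae_of_all _ fun p hp => by
      rw [det_splitByRatioFDeriv, abs_neg, abs_of_pos hp.1]
  rw [withDensity_congr_ae hdet, map_withDensity_abs_det_fderiv_eq_addHaar volume
    hB.nullMeasurableSet (fun p _ => (hasFDerivAt_splitByRatio p).hasFDerivWithinAt)
    injOn_splitByRatio, splitByRatio_image]

lemma map_sumAndRatio_restrict_withDensity {f : ℝ × ℝ → ℝ≥0∞} (hf : Measurable f) :
    ((volume.restrict (Ioi 0 ×ˢ Ioi 0)).withDensity f).map sumAndRatio =
      (volume.restrict (Ioi 0 ×ˢ Ioo 0 1)).withDensity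
        fun p => ENNReal.ofReal p.1 * f (splitByRatio p) := by
  have hB : MeasurableSet (Ioi (0 : ℝ) ×ˢ Ioo (0 : ℝ) 1) := measurableSet_Ioi.prod measurableSet_Ioo
  set ν := (volume.restrict (Ioi 0 ×ˢ Ioo 0 1)).withDensity
    fun p => ENNReal.ofReal p.1 * f (splitByRatio p)
  have hinv : sumAndRatio ∘ splitByRatio =ᵐ[ν] id :=
    (withDensity_absolutelyContinuous _ _).ae_le <| (ae_restrict_iff' hB).2 <|
      ae_of_all _ fun p hp => sumAndRatio_splitByRatio (ne_of_gt hp.1)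
  rw [← map_splitByRatio_withDensity, ← Measure.map_withDensity_comp measurable_splitByRatio hf,
    ← withDensity_mul _ (by fun_prop) (hf.comp measurable_splitByRatio),
    Measure.map_map measurable_sumAndRatio measurable_splitByRatio]
  exact (Measure.map_congr hinv).trans Measure.map_id

lemma measurable_gammaPdfShapeRate (a r : ℝ) : Measurable (gammaPdfShapeRate a r) :=
  Measurable.ite measurableSet_Ioi (by fun_prop) measurable_const

lemma measurable_betaPdf (a b : ℝ) : Measurable (betaPdf a b) :=
  Measurable.ite (measurableSet_Ioo (a := (0 : ℝ)) (b := 1)) (by fun_prop) measurable_const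

lemma measurable_bgPdf (b₀ a₀ a₁ a₂ : ℝ) :
    Measurable fun p : ℝ × ℝ => bgPdf b₀ a₀ a₁ a₂ p.1 p.2 :=
  Measurable.ite (measurableSet_Ioi.prod (measurableSet_Ioi (a := (0 : ℝ)))) (by fun_prop)
    measurable_const

lemma gammaPdfShapeRate_nonneg {a r : ℝ} (ha : 0 < a) (hr : 0 ≤ r) (x : ℝ) :
    0 ≤ gammaPdfShapeRate a r x := by
  unfold gammaPdfShapeRate
  split_ifs with hx
  · have := Real.Gamma_pos_of_pos ha
    positivity
  · rfl

lemma support_bgPdf_subset (b₀ a₀ a₁ a₂ : ℝ) :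
    (fun p : ℝ × ℝ => ENNReal.ofReal (bgPdf b₀ a₀ a₁ a₂ p.1 p.2)).support ⊆ Ioi 0 ×ˢ Ioi 0 :=
  fun p hp => by_contra fun h => hp <| by simp [bgPdf, if_neg (show ¬(0 < p.1 ∧ 0 < p.2) from h)]

lemma support_gammaPdfShapeRate_mul_betaPdf_subset (a r b₁ b₂ : ℝ) :
    (fun p : ℝ × ℝ => ENNReal.ofReal (gammaPdfShapeRate a r p.1) *
      ENNReal.ofReal (betaPdf b₁ b₂ p.2)).support ⊆ Ioi 0 ×ˢ Ioo 0 1 := by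
  intro p hp
  simp only [Function.mem_support, ne_eq, mul_eq_zero, not_or] at hp
  obtain ⟨hγ, hβ⟩ := hp
  refine ⟨by_contra fun h => hγ ?_, by_contra fun h => hβ ?_⟩
  · simp [gammaPdfShapeRate, if_neg (show ¬0 < p.1 from h)]
  · simp [betaPdf, if_neg (show ¬(0 < p.2 ∧ p.2 < 1) from h)]

lemma mul_bgPdf_splitByRatio {b₀ a₀ a₁ a₂ u v : ℝ} (hb₀ : 0 < b₀) (hu : 0 < u) (hv : 0 < v)
    (hv₁ : v < 1) :
    u * bgPdf b₀ a₀ a₁ a₂ (u * v) (u * (1 - v)) = gammaPdfShapeRate a₀ b₀ u * betaPdf a₁ a₂ v := by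
  have hv' : 0 < 1 - v := sub_pos.2 hv₁
  rw [bgPdf, if_pos ⟨mul_pos hu hv, mul_pos hu hv'⟩, gammaPdfShapeRate, if_pos hu,
    betaPdf, if_pos ⟨hv, hv₁⟩, show u * v + u * (1 - v) = u by ring,
    Real.mul_rpow hb₀.le hu.le, Real.mul_rpow hu.le hv.le, Real.mul_rpow hu.le hv'.le]
  have hb : b₀ ^ a₀ = b₀ ^ (a₀ - a₁ - a₂) * b₀ ^ a₁ * b₀ ^ a₂ := by
    rw [← Real.rpow_add hb₀, ← Real.rpow_add hb₀]; ring_nf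
  have hu' : u ^ (a₀ - 1) = u * (u ^ (a₀ - a₁ - a₂) * u ^ (a₁ - 1) * u ^ (a₂ - 1)) := by
    rw [show a₀ - 1 = 1 + (a₀ - a₁ - a₂) + (a₁ - 1) + (a₂ - 1) by ring, Real.rpow_add hu,
      Real.rpow_add hu, Real.rpow_add hu, Real.rpow_one]
    ring
  have he : Real.exp (-b₀ * u) = Real.exp (-b₀ * (u * v)) * Real.exp (-b₀ * (u * (1 - v))) := by
    rw [← Real.exp_add]; ring_nf
  rw [hb, hu', he]
  ring

theorem bg_pushforward_eq_gamma_prod_beta_general (b₀ a₀ a₁ a₂ : ℝ)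
    (hb₀ : 0 < b₀) (ha₀ : 0 < a₀) :
    Measure.map (fun p : ℝ × ℝ => (p.1 + p.2, p.1 / (p.1 + p.2))) (bgMeasure b₀ a₀ a₁ a₂) =
      (volume.withDensity fun u => ENNReal.ofReal (gammaPdfShapeRate a₀ b₀ u)).prod
        (volume.withDensity fun v => ENNReal.ofReal (betaPdf a₁ a₂ v)) := by
  have hB : MeasurableSet (Ioi (0 : ℝ) ×ˢ Ioo (0 : ℝ) 1) := measurableSet_Ioi.prod measurableSet_Ioo
  change (bgMeasure b₀ a₀ a₁ a₂).map sumAndRatio = _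
  rw [bgMeasure, withDensity_eq_restrict_withDensity (measurableSet_Ioi.prod measurableSet_Ioi)
      (support_bgPdf_subset b₀ a₀ a₁ a₂),
    map_sumAndRatio_restrict_withDensity (measurable_bgPdf b₀ a₀ a₁ a₂).ennreal_ofReal,
    prod_withDensity (measurable_gammaPdfShapeRate a₀ b₀).ennreal_ofReal
      (measurable_betaPdf a₁ a₂).ennreal_ofReal, ← Measure.volume_eq_prod,
    withDensity_eq_restrict_withDensity hB (support_gammaPdfShapeRate_mul_betaPdf_subset _ _ _ _)]
  refine withDensity_congr_ae <| (ae_restrict_iff' hB).2 <| ae_of_all _ ?_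
  rintro ⟨u, v⟩ ⟨hu, hv, hv₁⟩
  dsimp only [splitByRatio]
  rw [← ENNReal.ofReal_mul hu.le, ← ENNReal.ofReal_mul (gammaPdfShapeRate_nonneg ha₀ hb₀.le u)]
  exact congrArg ENNReal.ofReal (mul_bgPdf_splitByRatio hb₀ hu hv hv₁)

/-- If `(λ₁, λ₂) ~ BG(b₀, a₀, a₁, a₂)`, then `U = λ₁ + λ₂ ~ Gamma(a₀, b₀)`,
`V = λ₁/(λ₁+λ₂) ~ Beta(a₁, a₂)` and `U`, `V` are independent: the pushforward of
`BG(b₀, a₀, a₁, a₂)` under `(λ₁, λ₂) ↦ (λ₁ + λ₂, λ₁/(λ₁+λ₂))` is the product measure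
`Gamma(a₀, b₀) ⊗ Beta(a₁, a₂)`. -/
theorem bg_pushforward_eq_gamma_prod_beta (b₀ a₀ a₁ a₂ : ℝ)
    (hb₀ : 0 < b₀) (ha₀ : 0 < a₀) (ha₁ : 0 < a₁) (ha₂ : 0 < a₂) :
    Measure.map (fun p : ℝ × ℝ => (p.1 + p.2, p.1 / (p.1 + p.2))) (bgMeasure b₀ a₀ a₁ a₂) =
      (volume.withDensity fun u => ENNReal.ofReal (gammaPdfShapeRate a₀ b₀ u)).prod
        (volume.withDensity fun v => ENNReal.ofReal (betaPdf a₁ a₂ v)) :=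
  bg_pushforward_eq_gamma_prod_beta_general b₀ a₀ a₁ a₂ hb₀ ha₀
end

section
/- Let b₀ > 0, a₀ > 0, a₁ > 0, a₂ > 0, W ≥ 0, and let D₁, D₂ be nonnegative integers with a₀ + D₁ + D₂ > 2. Let (λ₁, λ₂) have the Beta-Gamma distribution BG(W + b₀, a₀ + D₁ + D₂, a₁ + D₁, a₂ + D₂), and set θ₁ = 1/λ₁, θ₂ = 1/λ₂. For k = 1, 2 with a_k + D_k > 2, define A_k = (W + b₀)² (a₁ + a₂ + D₁ + D₂ − 1) / ((a₀ + D₁ + D₂ − 1)(a_k + D_k − 1)) and B_k = (a₁ + a₂ + D₁ + D₂ − 2) / ((a₀ + D₁ + D₂ − 2)(a_k + D_k − 2)) − (a₁ + a₂ + D₁ + D₂ − 1) / ((a₀ + D₁ + D₂ − 1)(a_k + D_k − 1)). Then the posterior variances satisfy Var(θ₁) = A₁ B₁ and Var(θ₂) = A₂ B₂. -/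
/-!
Writing the density of `BG(b, A, P, Q)` as
`b ^ A / (Γ(A) B(P, Q)) · x ^ (P - 1) y ^ (Q - 1) · (x + y) ^ (A - P - Q) e ^ (-b (x + y))`,
the shear `(x, y) ↦ (x, x + y)` and Tonelli reduce the integral of `x ^ (p - 1) y ^ (q - 1) g (x + y)`
over the quadrant to `B(p, q) ∫ s ^ (p + q - 1) g s`, a Beta integral times a one-dimensional one.
Hence `E[λ₁ ^ (-r)] = b ^ r · Γ(A - r) / Γ(A) · B(P - r, Q) / B(P, Q)`, and `r = 1, 2` with
`Var θ = E[θ ^ 2] - E[θ] ^ 2` give the formula for `θ₁`. Since `BG(b, A, P, Q)` is carried to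
`BG(b, A, Q, P)` by swapping the coordinates, the formula for `θ₂` is the same one.
-/

open MeasureTheory ProbabilityTheory

open Real Set
open scoped ENNReal

lemma lintegral_rpow_mul_exp_neg_mul_Ioi {t b : ℝ} (ht : 0 < t) (hb : 0 < b) :
    ∫⁻ x in Ioi 0, ENNReal.ofReal (x ^ (t - 1) * exp (-(b * x))) =
      ENNReal.ofReal (Gamma t / b ^ t) := by
  have hval := integral_rpow_mul_exp_neg_mul_Ioi ht hb
  have hpos : 0 < (1 / b) ^ t * Gamma t := by positivity
  rw [← ofReal_integral_eq_lintegral_ofReal (.of_integral_ne_zero (hval ▸ hpos.ne'))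
      (ae_restrict_of_forall_mem measurableSet_Ioi fun x (hx : 0 < x) => by positivity),
    hval, div_rpow zero_le_one hb.le, one_rpow, div_mul_eq_mul_div, one_mul]

lemma lintegral_rpow_mul_one_sub_rpow_Ioo {p q : ℝ} (hp : 0 < p) (hq : 0 < q) :
    ∫⁻ x in Ioo 0 1, ENNReal.ofReal (x ^ (p - 1) * (1 - x) ^ (q - 1)) =
      ENNReal.ofReal (beta p q) := by
  have hB := beta_pos hp hq
  have h := lintegral_betaPDF_eq_one hp hq
  simp_rw [lintegral_betaPDF, mul_assoc, ENNReal.ofReal_mul (one_div_pos.2 hB).le] at h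
  rw [lintegral_const_mul' _ _ ENNReal.ofReal_ne_top] at h
  calc _ = ENNReal.ofReal (beta p q) * ENNReal.ofReal (1 / beta p q) *
        ∫⁻ x in Ioo 0 1, ENNReal.ofReal (x ^ (p - 1) * (1 - x) ^ (q - 1)) := by
        rw [← ENNReal.ofReal_mul hB.le, mul_one_div_cancel hB.ne', ENNReal.ofReal_one, one_mul]
    _ = ENNReal.ofReal (beta p q) := by rw [mul_assoc, h, mul_one]

lemma lintegral_rpow_mul_sub_rpow_Ioo {p q s : ℝ} (hp : 0 < p) (hq : 0 < q) (hs : 0 < s) :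
    ∫⁻ x in Ioo 0 s, ENNReal.ofReal (x ^ (p - 1) * (s - x) ^ (q - 1)) =
      ENNReal.ofReal (s ^ (p + q - 1) * beta p q) := by
  have hscale : ∀ u ∈ Ioo (0 : ℝ) 1, ENNReal.ofReal |s| *
      ENNReal.ofReal ((s * u) ^ (p - 1) * (s - s * u) ^ (q - 1)) =
      ENNReal.ofReal (s ^ (p + q - 1)) * ENNReal.ofReal (u ^ (p - 1) * (1 - u) ^ (q - 1)) := by
    rintro u ⟨hu0, hu1⟩
    have h1u : 0 < 1 - u := by linarith
    rw [abs_of_pos hs, ← ENNReal.ofReal_mul hs.le, ← ENNReal.ofReal_mul (by positivity),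
      show s - s * u = s * (1 - u) by ring, mul_rpow hs.le hu0.le, mul_rpow hs.le h1u.le,
      show p + q - 1 = 1 + (p - 1) + (q - 1) by ring, rpow_add hs, rpow_add hs, rpow_one]
    ring_nf
  have himage : (s * ·) '' Ioo 0 1 = Ioo 0 s := by
    rw [image_mul_left_Ioo hs, mul_zero, mul_one]
  rw [← himage, lintegral_image_eq_lintegral_abs_deriv_mul measurableSet_Ioo
      (f' := fun _ => s) (fun u _ => by simpa using ((hasDerivAt_id u).const_mul s).hasDerivWithinAt)
      (mul_right_injective₀ hs.ne').injOn,
    setLIntegral_congr_fun measurableSet_Ioo hscale,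
    lintegral_const_mul' _ _ ENNReal.ofReal_ne_top, lintegral_rpow_mul_one_sub_rpow_Ioo hp hq,
    ← ENNReal.ofReal_mul (by positivity)]

lemma lintegral_Ioi_prod_Ioi_rpow_mul_comp_add {p q : ℝ} (hp : 0 < p) (hq : 0 < q)
    {g : ℝ → ℝ≥0∞} (hg : Measurable g) :
    ∫⁻ z in Ioi 0 ×ˢ Ioi 0, ENNReal.ofReal (z.1 ^ (p - 1) * z.2 ^ (q - 1)) * g (z.1 + z.2) =
      ENNReal.ofReal (beta p q) * ∫⁻ s in Ioi 0, ENNReal.ofReal (s ^ (p + q - 1)) * g s := by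
  set T : Set (ℝ × ℝ) := {z | 0 < z.1 ∧ z.1 < z.2}
  set G : ℝ × ℝ → ℝ≥0∞ := fun z => ENNReal.ofReal (z.1 ^ (p - 1) * (z.2 - z.1) ^ (q - 1)) * g z.2
  have hT : MeasurableSet T :=
    (measurableSet_lt measurable_const measurable_fst).inter
      (measurableSet_lt measurable_fst measurable_snd)
  have hTG : Measurable (T.indicator G) := (by fun_prop : Measurable G).indicator hT
  have hshear : ∫⁻ z in Ioi 0 ×ˢ Ioi 0,
      ENNReal.ofReal (z.1 ^ (p - 1) * z.2 ^ (q - 1)) * g (z.1 + z.2) = ∫⁻ z, T.indicator G z := by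
    rw [Measure.volume_eq_prod, ← (measurePreserving_prod_add volume volume).lintegral_comp hTG,
      ← lintegral_indicator (measurableSet_Ioi.prod measurableSet_Ioi)]
    refine lintegral_congr fun z => ?_
    simp [T, G, indicator, Set.mem_prod]
  have hfiber : ∀ s, ∫⁻ x, T.indicator G (x, s) =
      (Ioi 0).indicator (fun s => ENNReal.ofReal (s ^ (p + q - 1) * beta p q) * g s) s := by
    intro s
    have : (fun x => T.indicator G (x, s)) = (Ioo 0 s).indicator
        fun x => ENNReal.ofReal (x ^ (p - 1) * (s - x) ^ (q - 1)) * g s := by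
      ext x; simp [T, G, indicator]
    rw [this, lintegral_indicator measurableSet_Ioo]
    rcases le_or_gt s 0 with hs | hs
    · simp [hs]
    · rw [indicator_of_mem (mem_Ioi.2 hs), lintegral_mul_const _ (by fun_prop),
        lintegral_rpow_mul_sub_rpow_Ioo hp hq hs]
  rw [hshear, Measure.volume_eq_prod, lintegral_prod_symm' _ hTG]
  simp_rw [hfiber]
  rw [lintegral_indicator measurableSet_Ioi, ← lintegral_const_mul' _ _ ENNReal.ofReal_ne_top]
  refine setLIntegral_congr_fun measurableSet_Ioi fun s (hs : 0 < s) => ?_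
  rw [mul_comm (s ^ _), ENNReal.ofReal_mul (beta_pos hp hq).le, mul_assoc]

lemma lintegral_Ioi_prod_Ioi_rpow_mul_exp_neg_mul_add {p q c b : ℝ} (hp : 0 < p) (hq : 0 < q)
    (hpqc : 0 < p + q + c) (hb : 0 < b) :
    ∫⁻ z in Ioi 0 ×ˢ Ioi 0, ENNReal.ofReal (z.1 ^ (p - 1) * z.2 ^ (q - 1)) *
        ENNReal.ofReal ((z.1 + z.2) ^ c * exp (-(b * (z.1 + z.2)))) =
      ENNReal.ofReal (beta p q * (Gamma (p + q + c) / b ^ (p + q + c))) := by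
  rw [lintegral_Ioi_prod_Ioi_rpow_mul_comp_add hp hq
      (g := fun s => ENNReal.ofReal (s ^ c * exp (-(b * s)))) (by fun_prop),
    ENNReal.ofReal_mul (beta_pos hp hq).le, ← lintegral_rpow_mul_exp_neg_mul_Ioi hpqc hb]
  congr 1
  refine setLIntegral_congr_fun measurableSet_Ioi fun s (hs : 0 < s) => ?_
  rw [← ENNReal.ofReal_mul (by positivity), ← mul_assoc, ← rpow_add hs]
  ring_nf

lemma Gamma_eq_sub_one_mul {x : ℝ} (hx : x ≠ 1) : Gamma x = (x - 1) * Gamma (x - 1) := by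
  simpa using Gamma_add_one (sub_ne_zero.2 hx)

lemma Gamma_eq_sub_two_mul {x : ℝ} (hx₁ : x ≠ 1) (hx₂ : x ≠ 2) :
    Gamma x = (x - 1) * (x - 2) * Gamma (x - 2) := by
  rw [Gamma_eq_sub_one_mul hx₁, Gamma_eq_sub_one_mul (x := x - 1) (by contrapose! hx₂; linarith),
    sub_sub, one_add_one_eq_two, mul_assoc]

lemma one_div_sq_eq_rpow_neg_two (x : ℝ) : (1 / x) ^ 2 = x ^ (-2 : ℝ) := by
  rw [show (-2 : ℝ) = ((-2 : ℤ) : ℝ) by norm_num, rpow_intCast]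
  simp

lemma bgPdf_of_pos {b A P Q x y : ℝ} (hb : 0 < b) (hP : 0 < P) (hQ : 0 < Q)
    (hx : 0 < x) (hy : 0 < y) :
    bgPdf b A P Q x y = b ^ A / (Gamma A * beta P Q) *
      (x ^ (P - 1) * y ^ (Q - 1) * ((x + y) ^ (A - P - Q) * exp (-(b * (x + y))))) := by
  have hbA : b ^ A = b ^ (A - P - Q) * b ^ P * b ^ Q := by
    rw [← rpow_add hb, ← rpow_add hb]; ring_nf
  have hexp : exp (-(b * (x + y))) = exp (-b * x) * exp (-b * y) := by
    rw [← exp_add]; ring_nf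
  have := Gamma_pos_of_pos hP
  have := Gamma_pos_of_pos hQ
  rw [bgPdf, if_pos ⟨hx, hy⟩, beta, mul_rpow hb.le (by positivity), hbA, hexp]
  field_simp

@[fun_prop]
lemma measurable_bgPdf_s8 (b A P Q : ℝ) : Measurable fun z : ℝ × ℝ => bgPdf b A P Q z.1 z.2 :=
  Measurable.ite ((measurableSet_lt measurable_const measurable_fst).inter
    (measurableSet_lt measurable_const measurable_snd)) (by fun_prop) measurable_const

lemma ae_bgMeasure_pos (b A P Q : ℝ) : ∀ᵐ z ∂bgMeasure b A P Q, 0 < z.1 ∧ 0 < z.2 := by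
  rw [bgMeasure, ae_withDensity_iff (by fun_prop)]
  refine ae_of_all _ fun z hz => ?_
  by_contra h
  simp [bgPdf, h] at hz

lemma bgPdf_swap (b A P Q x y : ℝ) : bgPdf b A P Q x y = bgPdf b A Q P y x := by
  simp only [bgPdf, and_comm (a := 0 < x), add_comm x y, add_comm P Q, sub_right_comm A P Q]
  split_ifs <;> ring

lemma measurePreserving_swap_bgMeasure (b A P Q : ℝ) :
    MeasurePreserving Prod.swap (bgMeasure b A P Q) (bgMeasure b A Q P) := by
  refine ⟨measurable_swap, Measure.ext fun s hs => ?_⟩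
  rw [Measure.map_apply measurable_swap hs, bgMeasure, bgMeasure,
    withDensity_apply _ (measurable_swap hs), withDensity_apply _ hs, Measure.volume_eq_prod,
    ← Measure.measurePreserving_swap.setLIntegral_comp_preimage hs (by fun_prop)]
  simp only [Prod.fst_swap, Prod.snd_swap, ← bgPdf_swap]

section Moments

variable {b A P Q : ℝ}

lemma lintegral_rpow_neg_fst_bgMeasure {r : ℝ} (hb : 0 < b) (hA : 0 < A) (hP : 0 < P)
    (hQ : 0 < Q) (hrA : r < A) (hrP : r < P) :
    ∫⁻ z, ENNReal.ofReal (z.1 ^ (-r)) ∂bgMeasure b A P Q =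
      ENNReal.ofReal (b ^ r * (Gamma (A - r) / Gamma A) * (beta (P - r) Q / beta P Q)) := by
  have hC : 0 ≤ b ^ A / (Gamma A * beta P Q) := by
    have := Gamma_pos_of_pos hA
    have := beta_pos hP hQ
    positivity
  have hdensity : ∀ z : ℝ × ℝ,
      ENNReal.ofReal (bgPdf b A P Q z.1 z.2) * ENNReal.ofReal (z.1 ^ (-r)) =
        (Ioi 0 ×ˢ Ioi 0).indicator (fun z => ENNReal.ofReal (b ^ A / (Gamma A * beta P Q)) *
          (ENNReal.ofReal (z.1 ^ (P - r - 1) * z.2 ^ (Q - 1)) *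
            ENNReal.ofReal ((z.1 + z.2) ^ (A - P - Q) * exp (-(b * (z.1 + z.2)))))) z := by
    rintro ⟨x, y⟩
    by_cases hxy : 0 < x ∧ 0 < y
    · rw [indicator_of_mem (show (x, y) ∈ Ioi (0 : ℝ) ×ˢ Ioi 0 from hxy),
        bgPdf_of_pos hb hP hQ hxy.1 hxy.2]
      obtain ⟨hx, hy⟩ := hxy
      have : 0 ≤ (x + y) ^ (A - P - Q) * exp (-(b * (x + y))) := by positivity
      rw [← ENNReal.ofReal_mul (by positivity), ← ENNReal.ofReal_mul (by positivity),
        ← ENNReal.ofReal_mul (by positivity), show P - r - 1 = P - 1 + -r by ring, rpow_add hx]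
      ring_nf
    · have : (x, y) ∉ Ioi (0 : ℝ) ×ˢ Ioi 0 := by simpa using hxy
      simp [this, bgPdf, hxy]
  rw [bgMeasure, lintegral_withDensity_eq_lintegral_mul _ (by fun_prop) (by fun_prop)]
  simp only [Pi.mul_apply, hdensity]
  rw [lintegral_indicator (measurableSet_Ioi.prod measurableSet_Ioi),
    lintegral_const_mul' _ _ ENNReal.ofReal_ne_top,
    lintegral_Ioi_prod_Ioi_rpow_mul_exp_neg_mul_add (sub_pos.2 hrP) hQ (by linarith) hb,
    ← ENNReal.ofReal_mul hC]
  congr 1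
  have hbA : b ^ A = b ^ (A - r) * b ^ r := by rw [← rpow_add hb, sub_add_cancel]
  have := Gamma_pos_of_pos hA
  have := beta_pos hP hQ
  rw [show P - r + Q + (A - P - Q) = A - r by ring, hbA]
  field_simp

lemma isProbabilityMeasure_bgMeasure (hb : 0 < b) (hA : 0 < A) (hP : 0 < P) (hQ : 0 < Q) :
    IsProbabilityMeasure (bgMeasure b A P Q) := by
  have h := lintegral_rpow_neg_fst_bgMeasure hb hA hP hQ hA hP (r := 0)
  simp only [neg_zero, rpow_zero, ENNReal.ofReal_one, lintegral_const, one_mul, sub_zero,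
    div_self (Gamma_pos_of_pos hA).ne', div_self (beta_pos hP hQ).ne', mul_one] at h
  exact ⟨h⟩

lemma integrable_rpow_neg_fst_bgMeasure {r : ℝ} (hb : 0 < b) (hA : 0 < A) (hP : 0 < P)
    (hQ : 0 < Q) (hrA : r < A) (hrP : r < P) :
    Integrable (fun z : ℝ × ℝ => z.1 ^ (-r)) (bgMeasure b A P Q) := by
  refine ⟨(by fun_prop : Measurable fun z : ℝ × ℝ => z.1 ^ (-r)).aestronglyMeasurable, ?_⟩
  rw [hasFiniteIntegral_iff_ofReal
    ((ae_bgMeasure_pos b A P Q).mono fun z hz => rpow_nonneg hz.1.le _),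
    lintegral_rpow_neg_fst_bgMeasure hb hA hP hQ hrA hrP]
  exact ENNReal.ofReal_lt_top

lemma integral_rpow_neg_fst_bgMeasure {r : ℝ} (hb : 0 < b) (hA : 0 < A) (hP : 0 < P)
    (hQ : 0 < Q) (hrA : r < A) (hrP : r < P) :
    ∫ z, z.1 ^ (-r) ∂bgMeasure b A P Q =
      b ^ r * (Gamma (A - r) / Gamma A) * (beta (P - r) Q / beta P Q) := by
  rw [integral_eq_lintegral_of_nonneg_ae
    ((ae_bgMeasure_pos b A P Q).mono fun z hz => rpow_nonneg hz.1.le _)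
    (by fun_prop : Measurable fun z : ℝ × ℝ => z.1 ^ (-r)).aestronglyMeasurable,
    lintegral_rpow_neg_fst_bgMeasure hb hA hP hQ hrA hrP, ENNReal.toReal_ofReal]
  have := Gamma_pos_of_pos hA
  have := Gamma_pos_of_pos (sub_pos.2 hrA)
  have := beta_pos hP hQ
  have := beta_pos (sub_pos.2 hrP) hQ
  positivity

lemma integral_inv_fst_bgMeasure (hb : 0 < b) (hA : 1 < A) (hP : 1 < P) (hQ : 0 < Q) :
    ∫ z, 1 / z.1 ∂bgMeasure b A P Q = b * (P + Q - 1) / ((A - 1) * (P - 1)) := by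
  simp_rw [one_div, ← rpow_neg_one]
  rw [integral_rpow_neg_fst_bgMeasure hb (by linarith) (by linarith) hQ hA hP, rpow_one,
    beta, beta, sub_add_eq_add_sub, Gamma_eq_sub_one_mul (x := A) hA.ne', Gamma_eq_sub_one_mul (x := P) hP.ne',
    Gamma_eq_sub_one_mul (x := P + Q) (by linarith)]
  have := Gamma_pos_of_pos (sub_pos.2 hA)
  have := Gamma_pos_of_pos (sub_pos.2 hP)
  have := Gamma_pos_of_pos hQ
  have := Gamma_pos_of_pos (show 0 < P + Q - 1 by linarith)
  have : A - 1 ≠ 0 := by linarith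
  have : P - 1 ≠ 0 := by linarith
  field_simp

lemma integral_inv_sq_fst_bgMeasure (hb : 0 < b) (hA : 2 < A) (hP : 2 < P) (hQ : 0 < Q) :
    ∫ z, (1 / z.1) ^ 2 ∂bgMeasure b A P Q =
      b ^ 2 * ((P + Q - 1) * (P + Q - 2)) / ((A - 1) * (A - 2) * ((P - 1) * (P - 2))) := by
  simp_rw [one_div_sq_eq_rpow_neg_two]
  rw [integral_rpow_neg_fst_bgMeasure hb (by linarith) (by linarith) hQ hA hP, beta, beta,
    sub_add_eq_add_sub, Gamma_eq_sub_two_mul (x := A) (by linarith) hA.ne',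
    Gamma_eq_sub_two_mul (x := P) (by linarith) hP.ne',
    Gamma_eq_sub_two_mul (x := P + Q) (by linarith) (by linarith), rpow_two]
  have := Gamma_pos_of_pos (sub_pos.2 hA)
  have := Gamma_pos_of_pos (sub_pos.2 hP)
  have := Gamma_pos_of_pos hQ
  have := Gamma_pos_of_pos (show 0 < P + Q - 2 by linarith)
  have : A - 1 ≠ 0 := by linarith
  have : A - 2 ≠ 0 := by linarith
  have : P - 1 ≠ 0 := by linarith
  have : P - 2 ≠ 0 := by linarith
  field_simp

lemma variance_inv_fst_bgMeasure (hb : 0 < b) (hA : 2 < A) (hP : 2 < P) (hQ : 0 < Q) :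
    variance (fun z : ℝ × ℝ => 1 / z.1) (bgMeasure b A P Q) =
      b ^ 2 * (P + Q - 1) / ((A - 1) * (P - 1)) *
        ((P + Q - 2) / ((A - 2) * (P - 2)) - (P + Q - 1) / ((A - 1) * (P - 1))) := by
  have : IsProbabilityMeasure (bgMeasure b A P Q) :=
    isProbabilityMeasure_bgMeasure hb (by linarith) (by linarith) hQ
  have hsq : Integrable (fun z : ℝ × ℝ => (1 / z.1) ^ 2) (bgMeasure b A P Q) := by
    simpa only [one_div_sq_eq_rpow_neg_two] using
      integrable_rpow_neg_fst_bgMeasure hb (by linarith) (by linarith) hQ hA hP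
  rw [variance_eq_sub ((memLp_two_iff_integrable_sq
      (by fun_prop : Measurable fun z : ℝ × ℝ => 1 / z.1).aestronglyMeasurable).2 hsq)]
  simp only [Pi.pow_apply]
  rw [integral_inv_fst_bgMeasure hb (by linarith) (by linarith) hQ,
    integral_inv_sq_fst_bgMeasure hb hA hP hQ]
  have : A - 1 ≠ 0 := by linarith
  have : A - 2 ≠ 0 := by linarith
  have : P - 1 ≠ 0 := by linarith
  have : P - 2 ≠ 0 := by linarith
  field_simp

lemma variance_inv_snd_bgMeasure (hb : 0 < b) (hA : 2 < A) (hP : 0 < P) (hQ : 2 < Q) :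
    variance (fun z : ℝ × ℝ => 1 / z.2) (bgMeasure b A P Q) =
      b ^ 2 * (P + Q - 1) / ((A - 1) * (Q - 1)) *
        ((P + Q - 2) / ((A - 2) * (Q - 2)) - (P + Q - 1) / ((A - 1) * (Q - 1))) := by
  rw [← add_comm Q P, ← variance_inv_fst_bgMeasure hb hA hQ hP]
  exact (measurePreserving_swap_bgMeasure b A P Q).variance_fun_comp (f := fun z => 1 / z.1)
    (by fun_prop)

end Moments

theorem posterior_variances_general (b₀ a₀ a₁ a₂ W : ℝ)
    (hb₀ : 0 < b₀) (ha₁ : 0 < a₁) (ha₂ : 0 < a₂) (hW : 0 ≤ W)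
    (D₁ D₂ : ℕ) (hpost : 2 < a₀ + D₁ + D₂) :
    (2 < a₁ + D₁ →
      variance (fun p : ℝ × ℝ => 1 / p.1)
          (bgMeasure (W + b₀) (a₀ + D₁ + D₂) (a₁ + D₁) (a₂ + D₂)) =
        ((W + b₀) ^ 2 * (a₁ + a₂ + D₁ + D₂ - 1) /
            ((a₀ + D₁ + D₂ - 1) * (a₁ + D₁ - 1))) *
          ((a₁ + a₂ + D₁ + D₂ - 2) / ((a₀ + D₁ + D₂ - 2) * (a₁ + D₁ - 2)) -
            (a₁ + a₂ + D₁ + D₂ - 1) / ((a₀ + D₁ + D₂ - 1) * (a₁ + D₁ - 1)))) ∧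
    (2 < a₂ + D₂ →
      variance (fun p : ℝ × ℝ => 1 / p.2)
          (bgMeasure (W + b₀) (a₀ + D₁ + D₂) (a₁ + D₁) (a₂ + D₂)) =
        ((W + b₀) ^ 2 * (a₁ + a₂ + D₁ + D₂ - 1) /
            ((a₀ + D₁ + D₂ - 1) * (a₂ + D₂ - 1))) *
          ((a₁ + a₂ + D₁ + D₂ - 2) / ((a₀ + D₁ + D₂ - 2) * (a₂ + D₂ - 2)) -
            (a₁ + a₂ + D₁ + D₂ - 1) / ((a₀ + D₁ + D₂ - 1) * (a₂ + D₂ - 1)))) := by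
  have hb : 0 < W + b₀ := by linarith
  have hsum : a₁ + (D₁ : ℝ) + (a₂ + D₂) = a₁ + a₂ + D₁ + D₂ := by ring
  refine ⟨fun h₁ => ?_, fun h₂ => ?_⟩
  · rw [variance_inv_fst_bgMeasure hb hpost h₁ (by positivity), hsum]
  · rw [variance_inv_snd_bgMeasure hb hpost (by positivity) h₂, hsum]

/-- Posterior variances: if `(λ₁, λ₂) ~ BG(W + b₀, a₀ + D₁ + D₂, a₁ + D₁, a₂ + D₂)` and
`θ_k = 1/λ_k`, then `Var(θ₁) = A₁ B₁` (when `a₁ + D₁ > 2`) and `Var(θ₂) = A₂ B₂`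
(when `a₂ + D₂ > 2`), with `A_k`, `B_k` as in the paper. -/
theorem posterior_variances (b₀ a₀ a₁ a₂ W : ℝ)
    (hb₀ : 0 < b₀) (ha₀ : 0 < a₀) (ha₁ : 0 < a₁) (ha₂ : 0 < a₂) (hW : 0 ≤ W)
    (D₁ D₂ : ℕ) (hpost : 2 < a₀ + D₁ + D₂) :
    (2 < a₁ + D₁ →
      variance (fun p : ℝ × ℝ => 1 / p.1)
          (bgMeasure (W + b₀) (a₀ + D₁ + D₂) (a₁ + D₁) (a₂ + D₂)) =
        ((W + b₀) ^ 2 * (a₁ + a₂ + D₁ + D₂ - 1) /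
            ((a₀ + D₁ + D₂ - 1) * (a₁ + D₁ - 1))) *
          ((a₁ + a₂ + D₁ + D₂ - 2) / ((a₀ + D₁ + D₂ - 2) * (a₁ + D₁ - 2)) -
            (a₁ + a₂ + D₁ + D₂ - 1) / ((a₀ + D₁ + D₂ - 1) * (a₁ + D₁ - 1)))) ∧
    (2 < a₂ + D₂ →
      variance (fun p : ℝ × ℝ => 1 / p.2)
          (bgMeasure (W + b₀) (a₀ + D₁ + D₂) (a₁ + D₁) (a₂ + D₂)) =
        ((W + b₀) ^ 2 * (a₁ + a₂ + D₁ + D₂ - 1) /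
            ((a₀ + D₁ + D₂ - 1) * (a₂ + D₂ - 1))) *
          ((a₁ + a₂ + D₁ + D₂ - 2) / ((a₀ + D₁ + D₂ - 2) * (a₂ + D₂ - 2)) -
            (a₁ + a₂ + D₁ + D₂ - 1) / ((a₀ + D₁ + D₂ - 1) * (a₂ + D₂ - 1)))) :=
  posterior_variances_general b₀ a₀ a₁ a₂ W hb₀ ha₁ ha₂ hW D₁ D₂ hpost
end

section
/- Let b₀ > 0, a₀ > 0, a₁ > 0, a₂ > 0, W > 0, and let D₁, D₂ be nonnegative integers. Then there exists a constant c > 0 such that for all λ₁ > 0 and λ₂ > 0, e^{−W(λ₁+λ₂)} λ₁^{D₁} λ₂^{D₂} · π(λ₁, λ₂ | b₀, a₀, a₁, a₂) = c · π(λ₁, λ₂ | W + b₀, a₀ + D₁ + D₂, a₁ + D₁, a₂ + D₂), where π(·, · | b, α₀, α₁, α₂) denotes the BG(b, α₀, α₁, α₂) density. That is, the Beta-Gamma family is conjugate for the exponential competing risks likelihood: the posterior of (λ₁, λ₂) under a BG(b₀, a₀, a₁, a₂) prior and likelihood proportional to λ₁^{D₁} λ₂^{D₂} e^{−W(λ₁+λ₂)}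 is BG(W + b₀, a₀ + D₁ + D₂, a₁ + D₁, a₂ + D₂). -/
open MeasureTheory

/-!
On the open quadrant the Beta-Gamma density factors as a normalising constant times the kernel
`(l₁ + l₂) ^ (a₀ - a₁ - a₂) * l₁ ^ (a₁ - 1) * l₂ ^ (a₂ - 1) * exp (-b * (l₁ + l₂))`.
Multiplying the kernel by the likelihood `exp (-W * (l₁ + l₂)) * l₁ ^ D₁ * l₂ ^ D₂` raises `b` by
`W` and `a₁`, `a₂` by `D₁`, `D₂`; raising `a₀` by `D₁ + D₂` leaves the exponent `a₀ - a₁ - a₂`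
unchanged, so the product is the kernel of the updated parameters, and `c` is the ratio of the
two normalising constants.
-/

section BetaGammaKernel

open Real

noncomputable def bgKernel (b a₀ a₁ a₂ l₁ l₂ : ℝ) : ℝ :=
  (l₁ + l₂) ^ (a₀ - a₁ - a₂) * l₁ ^ (a₁ - 1) * l₂ ^ (a₂ - 1) * exp (-b * (l₁ + l₂))

noncomputable def bgNormConst (b a₀ a₁ a₂ : ℝ) : ℝ :=
  Gamma (a₁ + a₂) / Gamma a₀ * b ^ a₀ / (Gamma a₁ * Gamma a₂)

theorem bgNormConst_pos {b a₀ a₁ a₂ : ℝ} (hb : 0 < b) (ha₀ : 0 < a₀) (ha₁ : 0 < a₁)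
    (ha₂ : 0 < a₂) : 0 < bgNormConst b a₀ a₁ a₂ := by
  have := Gamma_pos_of_pos ha₀
  have := Gamma_pos_of_pos ha₁
  have := Gamma_pos_of_pos ha₂
  have := Gamma_pos_of_pos (add_pos ha₁ ha₂)
  unfold bgNormConst
  positivity

theorem bgPdf_eq_bgNormConst_mul_bgKernel {b l₁ l₂ : ℝ} (a₀ a₁ a₂ : ℝ) (hb : 0 < b)
    (hl₁ : 0 < l₁) (hl₂ : 0 < l₂) :
    bgPdf b a₀ a₁ a₂ l₁ l₂ = bgNormConst b a₀ a₁ a₂ * bgKernel b a₀ a₁ a₂ l₁ l₂ := by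
  have hb_pow : b ^ (a₀ - a₁ - a₂) * b ^ a₁ * b ^ a₂ = b ^ a₀ := by
    rw [← rpow_add hb, ← rpow_add hb]
    ring_nf
  have hexp : exp (-b * l₁) * exp (-b * l₂) = exp (-b * (l₁ + l₂)) := by
    rw [← exp_add]
    ring_nf
  rw [bgPdf, if_pos ⟨hl₁, hl₂⟩, mul_rpow hb.le (by positivity), bgNormConst, bgKernel,
    ← hb_pow, ← hexp]
  field_simp

theorem likelihood_mul_bgKernel {l₁ l₂ : ℝ} (hl₁ : 0 < l₁) (hl₂ : 0 < l₂) (W b a₀ a₁ a₂ : ℝ)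
    (D₁ D₂ : ℕ) :
    exp (-W * (l₁ + l₂)) * l₁ ^ D₁ * l₂ ^ D₂ * bgKernel b a₀ a₁ a₂ l₁ l₂ =
      bgKernel (W + b) (a₀ + D₁ + D₂) (a₁ + D₁) (a₂ + D₂) l₁ l₂ := by
  have h₀ : a₀ + D₁ + D₂ - (a₁ + D₁) - (a₂ + D₂) = a₀ - a₁ - a₂ := by ring
  have h₁ : l₁ ^ (a₁ + D₁ - 1) = l₁ ^ (a₁ - 1) * l₁ ^ D₁ := by
    rw [add_sub_right_comm, rpow_add hl₁, rpow_natCast]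
  have h₂ : l₂ ^ (a₂ + D₂ - 1) = l₂ ^ (a₂ - 1) * l₂ ^ D₂ := by
    rw [add_sub_right_comm, rpow_add hl₂, rpow_natCast]
  have hexp : exp (-(W + b) * (l₁ + l₂)) = exp (-W * (l₁ + l₂)) * exp (-b * (l₁ + l₂)) := by
    rw [← exp_add]
    ring_nf
  rw [bgKernel, bgKernel, h₀, h₁, h₂, hexp]
  ring

end BetaGammaKernel

/-- Conjugacy of the Beta-Gamma family for the exponential competing risks likelihood:
`likelihood × prior density = c × posterior density` with posterior
`BG(W + b₀, a₀ + D₁ + D₂, a₁ + D₁, a₂ + D₂)` and some constant `c > 0`. -/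
theorem bg_is_conjugate_prior (b₀ a₀ a₁ a₂ W : ℝ)
    (hb₀ : 0 < b₀) (ha₀ : 0 < a₀) (ha₁ : 0 < a₁) (ha₂ : 0 < a₂) (hW : 0 < W)
    (D₁ D₂ : ℕ) :
    ∃ c : ℝ, 0 < c ∧ ∀ l₁ l₂ : ℝ, 0 < l₁ → 0 < l₂ →
      Real.exp (-W * (l₁ + l₂)) * l₁ ^ D₁ * l₂ ^ D₂ * bgPdf b₀ a₀ a₁ a₂ l₁ l₂ =
        c * bgPdf (W + b₀) (a₀ + D₁ + D₂) (a₁ + D₁) (a₂ + D₂) l₁ l₂ := by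
  have hprior := bgNormConst_pos hb₀ ha₀ ha₁ ha₂
  have hpost : 0 < bgNormConst (W + b₀) (a₀ + D₁ + D₂) (a₁ + D₁) (a₂ + D₂) :=
    bgNormConst_pos (by positivity) (by positivity) (by positivity) (by positivity)
  refine ⟨bgNormConst b₀ a₀ a₁ a₂ /
      bgNormConst (W + b₀) (a₀ + D₁ + D₂) (a₁ + D₁) (a₂ + D₂),
    div_pos hprior hpost, fun l₁ l₂ hl₁ hl₂ => ?_⟩
  rw [bgPdf_eq_bgNormConst_mul_bgKernel _ _ _ hb₀ hl₁ hl₂,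
    bgPdf_eq_bgNormConst_mul_bgKernel _ _ _ (by positivity) hl₁ hl₂,
    ← likelihood_mul_bgKernel hl₁ hl₂ W]
  field_simp
end

section
/- Let n ≥ 1 and j ≥ 1 be integers, let R₁, …, R_j be nonnegative integers with R₁ + ⋯ + R_j ≤ n − j, and set γ_v = n − v + 1 − Σ_{u=1}^{v−1} R_u for 1 ≤ v ≤ j + 1. Let θ > 0, T > 0, let i be an integer with 1 ≤ i ≤ j, and let t be a real number with t/i < 1/θ; write s = 1/θ − t/i > 0. Then ∫_{0 < z₁ < z₂ < ⋯ < z_j < T} exp(−s(Σ_{h=1}^{j} z_h (1 + R_h) + T γ_{j+1})) dz₁ ⋯ dz_j = s^{−j} Σ_{v=0}^{j} (−1)^v e^{−s T γ_{j−v+1}} / [ (∏_{h=1}^{v} (γ_{j+1−v} − γ_{j+1−v+h})) (∏_{h=1}^{j−v} (γ_h − γ_{j−v+1})) ]. (This identity is the computational content of the conditional moment generating function of θ̂₁ given J = j and D₁ = i in the case Z_{k:m:n} < T < Z_{m:m:n}.) -/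
/-!
Write `a v = γ_{v+1}`, so that `1 + R_{h+1} = a_h - a_{h+1}` and the integrand is
`exp(c(Σ_h z_h (a_h - a_{h+1}) + T a_k))` with `c = -s`. Integrating out the largest coordinate
`z_k` over `(z_{k-1}, T)` (with `z_0 = 0`) leaves, divided by `c (a_{k-1} - a_k)`, the difference
of two integrals of the same shape over a simplex of one dimension less: at `z_k = T` the node
`a_k` drops out, at `z_k = z_{k-1}` the node `a_{k-1}` is replaced by `a_k`. This is the
recursion of divided differences, so the integral is `c^{-k}` times the divided difference of
`x ↦ e^{cTx}` at the distinct nodes `γ_1 > ⋯ > γ_{k+1}`; writing that divided difference out and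
splitting each product at its omitted node gives the stated sum.
-/

open MeasureTheory

/-- `γ_v = n − v + 1 − Σ_{u=1}^{v−1} R_u`, the number of surviving units at the time of the
`v`-th failure in a progressive censoring scheme with removals `R 1, R 2, …`. -/
noncomputable def gam (n : ℕ) (R : ℕ → ℕ) (v : ℕ) : ℝ :=
  (n : ℝ) - v + 1 - ∑ u ∈ Finset.Icc 1 (v - 1), (R u : ℝ)

open Finset

noncomputable def dividedDiff (g : ℝ → ℝ) (t : Finset ℝ) : ℝ :=
  ∑ x ∈ t, g x / ∏ y ∈ t.erase x, (x - y)

lemma prod_erase_insert_sub {t : Finset ℝ} {x z : ℝ} (hx : x ∉ t) (hzx : z ≠ x) :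
    ∏ w ∈ (insert x t).erase z, (z - w) = (z - x) * ∏ w ∈ t.erase z, (z - w) := by
  rw [erase_insert_of_ne hzx.symm, prod_insert fun h => hx (mem_of_mem_erase h)]

lemma prod_erase_sub_ne_zero (t : Finset ℝ) (z : ℝ) : ∏ w ∈ t.erase z, (z - w) ≠ 0 :=
  prod_ne_zero_iff.2 fun _ hw => sub_ne_zero.2 (ne_of_mem_erase hw).symm

lemma dividedDiff_insert_insert (g : ℝ → ℝ) {t : Finset ℝ} {x y : ℝ} (hx : x ∉ t) (hy : y ∉ t)
    (hxy : x ≠ y) :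
    dividedDiff g (insert x (insert y t)) =
      (dividedDiff g (insert x t) - dividedDiff g (insert y t)) / (x - y) := by
  have hxyt : x ∉ insert y t := by simp [hxy, hx]
  have hPx : ∏ w ∈ t, (x - w) ≠ 0 := by
    simpa [erase_insert hx] using prod_erase_sub_ne_zero (insert x t) x
  have hPy : ∏ w ∈ t, (y - w) ≠ 0 := by
    simpa [erase_insert hy] using prod_erase_sub_ne_zero (insert y t) y
  have hxy' : x - y ≠ 0 := sub_ne_zero.2 hxy
  have hyx' : y - x ≠ 0 := sub_ne_zero.2 hxy.symm
  -- For the nodes `z ∈ t` this is `(x - y) / ((z - x) (z - y)) = 1 / (z - x) - 1 / (z - y)`.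
  have hinner : ∀ z ∈ t, g z / (∏ w ∈ (insert x (insert y t)).erase z, (z - w)) * (x - y) =
      g z / ∏ w ∈ (insert x t).erase z, (z - w) - g z / ∏ w ∈ (insert y t).erase z, (z - w) := by
    intro z hz
    have hzx : z ≠ x := ne_of_mem_of_not_mem hz hx
    have hzy : z ≠ y := ne_of_mem_of_not_mem hz hy
    have hPz := prod_erase_sub_ne_zero t z
    have hzx' : z - x ≠ 0 := sub_ne_zero.2 hzx
    have hzy' : z - y ≠ 0 := sub_ne_zero.2 hzy
    rw [prod_erase_insert_sub hxyt hzx, prod_erase_insert_sub hy hzy,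
      prod_erase_insert_sub hx hzx]
    field_simp
    ring
  rw [eq_div_iff hxy']
  unfold dividedDiff
  rw [sum_insert hxyt, sum_insert hy, sum_insert hx, sum_insert hy, add_mul, add_mul, sum_mul,
    sum_congr rfl hinner, sum_sub_distrib, prod_erase_insert_sub hxyt hxy.symm, erase_insert hxyt,
    prod_insert hy, erase_insert hx, erase_insert hy]
  field_simp
  ring

lemma dividedDiff_image {ι : Type*} [DecidableEq ι] (g : ℝ → ℝ) {s : Finset ι} {a : ι → ℝ}
    (ha : Set.InjOn a s) :
    dividedDiff g (s.image a) = ∑ i ∈ s, g (a i) / ∏ j ∈ s.erase i, (a i - a j) := by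
  unfold dividedDiff
  rw [sum_image ha]
  refine sum_congr rfl fun i hi => ?_
  have herase : (s.image a).erase (a i) = (s.erase i).image a := by
    ext y
    simp only [mem_erase, mem_image]
    constructor
    · rintro ⟨hy, j, hj, rfl⟩
      exact ⟨j, ⟨fun hji => hy (hji ▸ rfl), hj⟩, rfl⟩
    · rintro ⟨j, ⟨hji, hj⟩, rfl⟩
      exact ⟨fun h => hji (ha hj hi h), j, hj, rfl⟩
  rw [herase, prod_image fun x hx y hy => ha (mem_of_mem_erase hx) (mem_of_mem_erase hy)]

lemma prod_range_erase {M : Type*} [CommMonoid M] (f : ℕ → M) {w n : ℕ} (hw : w < n) :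
    ∏ m ∈ (range n).erase w, f m = (∏ m ∈ range w, f m) * ∏ m ∈ Ico (w + 1) n, f m := by
  rw [← prod_union]
  · congr 1
    ext m
    simp only [mem_erase, mem_range, mem_union, mem_Ico]
    omega
  · rw [disjoint_left]
    simp only [mem_range, mem_Ico]
    omega

lemma prod_Icc_one_eq_prod_range {M : Type*} [CommMonoid M] (f : ℕ → M) (n : ℕ) :
    ∏ h ∈ Icc 1 n, f h = ∏ m ∈ range n, f (m + 1) := by
  rw [← Ico_add_one_right_eq_Icc, prod_Ico_eq_prod_range]
  simp [add_comm]

lemma prod_range_erase_sub (b : ℕ → ℝ) {w j : ℕ} (hw : w ≤ j) :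
    ∏ m ∈ (range (j + 1)).erase w, (b (w + 1) - b (m + 1)) =
      (-1) ^ w * ((∏ h ∈ Icc 1 (j - w), (b (w + 1) - b (w + 1 + h))) *
        ∏ h ∈ Icc 1 w, (b h - b (w + 1))) := by
  rw [prod_range_erase _ (by omega), prod_Ico_eq_prod_range, prod_Icc_one_eq_prod_range,
    prod_Icc_one_eq_prod_range, Nat.add_sub_add_right]
  have hneg : ∏ m ∈ range w, (b (w + 1) - b (m + 1)) =
      (-1) ^ w * ∏ m ∈ range w, (b (m + 1) - b (w + 1)) := by
    simpa only [neg_sub, card_range] using prod_neg (s := range w) fun m => b (m + 1) - b (w + 1)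
  simp_rw [hneg, add_assoc]
  ring

lemma dividedDiff_image_range_succ (g : ℝ → ℝ) (b : ℕ → ℝ) (j : ℕ)
    (hb : Set.InjOn (fun v => b (v + 1)) (range (j + 1))) :
    dividedDiff g ((range (j + 1)).image fun v => b (v + 1)) =
      (-1) ^ j * ∑ v ∈ range (j + 1), (-1) ^ v * g (b (j - v + 1)) /
        ((∏ h ∈ Icc 1 v, (b (j + 1 - v) - b (j + 1 - v + h))) *
          ∏ h ∈ Icc 1 (j - v), (b h - b (j - v + 1))) := by
  conv_rhs => rw [← sum_range_reflect, mul_sum]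
  rw [dividedDiff_image g hb]
  refine sum_congr rfl fun w hw => ?_
  obtain ⟨d, rfl⟩ : ∃ d, j = w + d := ⟨j - w, by simp at hw; omega⟩
  rw [prod_range_erase_sub b (Nat.le_add_right w d), show w + d + 1 - 1 - w = d by omega,
    Nat.add_sub_cancel, show w + d + 1 - d = w + 1 by omega, Nat.add_sub_cancel_left]
  have hsq : ∀ m : ℕ, (-1 : ℝ) ^ m * (-1) ^ m = 1 := fun m => by rw [← mul_pow]; norm_num
  have hsign : (-1 : ℝ) ^ (w + d) * (-1) ^ d = (-1) ^ w := by rw [pow_add, mul_assoc, hsq, mul_one]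
  rw [div_mul_eq_div_div_swap, div_eq_mul_inv _ ((-1) ^ w), inv_eq_of_mul_eq_one_right (hsq w),
    ← mul_div_assoc, ← mul_assoc, hsign, mul_div_assoc]
  exact mul_comm _ _

section OrderedSimplex

def orderedSimplex (k : ℕ) (T : ℝ) : Set (Fin k → ℝ) :=
  {z | StrictMono z ∧ ∀ h, 0 < z h ∧ z h < T}

-- The coordinate `z_k` of `w = (z_1, …, z_k)`, with the convention `z_0 = 0`.
def lastOrZero : {k : ℕ} → (Fin k → ℝ) → ℝ
  | 0, _ => 0
  | _ + 1, w => w (Fin.last _)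

variable {k : ℕ} {T : ℝ}

lemma measurableSet_orderedSimplex : MeasurableSet (orderedSimplex k T) := by
  simp only [orderedSimplex, StrictMono, Set.ofPred_and, Set.ofPred_forall]
  measurability

lemma integrableOn_orderedSimplex {f : (Fin k → ℝ) → ℝ} (hf : Continuous f) :
    IntegrableOn f (orderedSimplex k T) :=
  (hf.continuousOn.integrableOn_compact (isCompact_univ_pi fun _ => isCompact_Icc)).mono_set
    fun _ hz h _ => ⟨(hz.2 h).1.le, (hz.2 h).2.le⟩

lemma strictMono_snoc_iff {α : Type*} [Preorder α] {w : Fin k → α} {y : α} :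
    StrictMono (Fin.snoc w y : Fin (k + 1) → α) ↔ StrictMono w ∧ ∀ h, w h < y := by
  refine ⟨fun hm => ⟨fun i j hij => ?_, fun h => ?_⟩, fun ⟨hm, hy⟩ => ?_⟩
  · simpa using hm (Fin.castSucc_lt_castSucc_iff.2 hij)
  · simpa using hm (Fin.castSucc_lt_last h)
  · intro i j hij
    obtain ⟨i, rfl⟩ := Fin.exists_castSucc_eq.2 (Fin.ne_last_of_lt (hij.trans_le (Fin.le_last j)))
    induction j using Fin.lastCases with
    | last => simpa using hy i
    | cast j => simpa using hm (Fin.castSucc_lt_castSucc_iff.1 hij)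

lemma lastOrZero_lt_iff {w : Fin k → ℝ} (hm : StrictMono w) (hpos : ∀ h, 0 < w h) {y : ℝ} :
    lastOrZero w < y ↔ 0 < y ∧ ∀ h, w h < y := by
  cases k with
  | zero => simp [lastOrZero]
  | succ k =>
    refine ⟨fun hy => ⟨(hpos _).trans hy, fun h => (hm.monotone (Fin.le_last h)).trans_lt hy⟩,
      fun hy => hy.2 _⟩

lemma snoc_mem_orderedSimplex_iff {w : Fin k → ℝ} {y : ℝ} :
    (Fin.snoc w y : Fin (k + 1) → ℝ) ∈ orderedSimplex (k + 1) T ↔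
      w ∈ orderedSimplex k T ∧ y ∈ Set.Ioo (lastOrZero w) T := by
  simp only [orderedSimplex, Set.mem_ofPred_eq, strictMono_snoc_iff, Fin.forall_fin_succ',
    Fin.snoc_castSucc, Fin.snoc_last, Set.mem_Ioo]
  constructor
  · rintro ⟨⟨hm, hlt⟩, hw, hy⟩
    exact ⟨⟨hm, hw⟩, (lastOrZero_lt_iff hm fun h => (hw h).1).2 ⟨hy.1, hlt⟩, hy.2⟩
  · rintro ⟨⟨hm, hw⟩, hy, hyT⟩
    obtain ⟨hy0, hlt⟩ := (lastOrZero_lt_iff hm fun h => (hw h).1).1 hy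
    exact ⟨⟨hm, hlt⟩, hw, hy0, hyT⟩

lemma integral_eq_integral_snoc {E : Type*} [NormedAddCommGroup E] [NormedSpace ℝ E]
    {f : (Fin (k + 1) → ℝ) → E} (hf : Integrable f) :
    ∫ z, f z = ∫ w : Fin k → ℝ, ∫ y : ℝ, f (Fin.snoc w y) := by
  have he := (volume_preserving_piFinSuccAbove (fun _ : Fin (k + 1) => ℝ) (Fin.last k)).symm
  have hsymm : ∀ p : ℝ × (Fin k → ℝ),
      (MeasurableEquiv.piFinSuccAbove (fun _ => ℝ) (Fin.last k)).symm p = Fin.snoc p.2 p.1 := by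
    intro p
    ext
    simp [MeasurableEquiv.piFinSuccAbove_symm_apply]
  rw [← he.integral_comp', Measure.volume_eq_prod, integral_prod_symm]
  · simp_rw [hsymm]
  · rw [← Measure.volume_eq_prod]
    exact (he.integrable_comp_emb (MeasurableEquiv.measurableEmbedding _)).2 hf

lemma setIntegral_orderedSimplex_succ {f : (Fin (k + 1) → ℝ) → ℝ} (hf : Continuous f) :
    ∫ z in orderedSimplex (k + 1) T, f z =
      ∫ w in orderedSimplex k T, ∫ y in Set.Ioo (lastOrZero w) T, f (Fin.snoc w y) := by
  rw [← integral_indicator measurableSet_orderedSimplex, integral_eq_integral_snoc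
    ((integrable_indicator_iff measurableSet_orderedSimplex).2 (integrableOn_orderedSimplex hf)),
    ← integral_indicator measurableSet_orderedSimplex]
  congr 1 with w
  classical
  by_cases hw : w ∈ orderedSimplex k T
  · rw [Set.indicator_of_mem hw, ← integral_indicator measurableSet_Ioo]
    congr 1 with y
    rw [Set.indicator_apply, Set.indicator_apply, snoc_mem_orderedSimplex_iff]
    simp only [hw, true_and]
  · simp [snoc_mem_orderedSimplex_iff, hw]

noncomputable def simplexExp (c T : ℝ) (a : ℕ → ℝ) {k : ℕ} (z : Fin k → ℝ) : ℝ :=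
  Real.exp (c * (∑ h : Fin k, z h * (a h - a (h + 1)) + T * a k))

variable {c : ℝ} {a : ℕ → ℝ}

lemma continuous_simplexExp : Continuous (simplexExp c T a : (Fin k → ℝ) → ℝ) := by
  unfold simplexExp
  fun_prop

lemma simplexExp_snoc (w : Fin k → ℝ) (y : ℝ) :
    simplexExp c T a (Fin.snoc w y : Fin (k + 1) → ℝ) =
      Real.exp (c * (a k - a (k + 1)) * (y - T)) * simplexExp c T a w := by
  rw [simplexExp, simplexExp, ← Real.exp_add]
  congr 1
  simp only [Fin.sum_univ_castSucc, Fin.snoc_castSucc, Fin.snoc_last, Fin.val_castSucc,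
    Fin.val_last]
  ring

lemma simplexExp_update (w : Fin k → ℝ) :
    simplexExp c T (Function.update a k (a (k + 1))) w =
      Real.exp (c * (a k - a (k + 1)) * (lastOrZero w - T)) * simplexExp c T a w := by
  unfold simplexExp
  rw [← Real.exp_add]
  congr 1
  cases k with
  | zero =>
    simp only [univ_eq_empty, sum_empty, lastOrZero, Function.update_self]
    ring
  | succ k =>
    simp only [Fin.sum_univ_castSucc, Fin.val_castSucc, Fin.val_last, lastOrZero,
      Function.update_self, Function.update_of_ne (Nat.succ_ne_self k).symm]
    rw [sum_congr rfl fun x _ => by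
      rw [Function.update_of_ne (by omega), Function.update_of_ne (by omega)]]
    ring

lemma integral_Ioo_exp_mul_sub (b p q : ℝ) (hb : b ≠ 0) (hpq : p ≤ q) :
    ∫ y in Set.Ioo p q, Real.exp (b * (y - q)) = (1 - Real.exp (b * (p - q))) / b := by
  rw [← integral_Ioc_eq_integral_Ioo, ← intervalIntegral.integral_of_le hpq,
    intervalIntegral.integral_comp_sub_right (fun y => Real.exp (b * y)),
    intervalIntegral.integral_comp_mul_left (fun y => Real.exp y) hb, integral_exp]
  simp only [sub_self, mul_zero, Real.exp_zero, smul_eq_mul]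
  field_simp

lemma lastOrZero_le (hT : 0 ≤ T) {w : Fin k → ℝ} (hw : w ∈ orderedSimplex k T) :
    lastOrZero w ≤ T := by
  cases k with
  | zero => exact hT
  | succ k => exact (hw.2 _).2.le

lemma setIntegral_simplexExp_succ (hc : c ≠ 0) (hT : 0 ≤ T) (ha : a k ≠ a (k + 1)) :
    ∫ z in orderedSimplex (k + 1) T, simplexExp c T a z =
      ((∫ w in orderedSimplex k T, simplexExp c T a w) -
        ∫ w in orderedSimplex k T, simplexExp c T (Function.update a k (a (k + 1))) w) /
        (c * (a k - a (k + 1))) := by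
  have hb : c * (a k - a (k + 1)) ≠ 0 := mul_ne_zero hc (sub_ne_zero.2 ha)
  rw [← integral_sub (integrableOn_orderedSimplex continuous_simplexExp)
    (integrableOn_orderedSimplex continuous_simplexExp), ← integral_div,
    setIntegral_orderedSimplex_succ continuous_simplexExp]
  refine setIntegral_congr_fun measurableSet_orderedSimplex fun w hw => ?_
  simp only [simplexExp_snoc, simplexExp_update]
  rw [integral_mul_const, integral_Ioo_exp_mul_sub _ _ _ hb (lastOrZero_le hT hw)]
  ring

lemma orderedSimplex_zero : orderedSimplex 0 T = Set.univ :=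
  Set.eq_univ_of_forall fun _ => ⟨fun i => i.elim0, fun h => h.elim0⟩

theorem setIntegral_simplexExp (hc : c ≠ 0) (hT : 0 ≤ T) (ha : Set.InjOn a (Set.Iic k)) :
    ∫ z in orderedSimplex k T, simplexExp c T a z =
      dividedDiff (fun x => Real.exp (c * T * x)) ((range (k + 1)).image a) / c ^ k := by
  induction k generalizing a with
  | zero =>
    simp [orderedSimplex_zero, simplexExp, integral_unique, measureReal_def, volume_pi,
      dividedDiff, mul_assoc]
  | succ k ih =>
    have hinj : ∀ u ≤ k + 1, ∀ v ≤ k + 1, a u = a v → u = v := fun u hu v hv h =>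
      ha (Set.mem_Iic.2 hu) (Set.mem_Iic.2 hv) h
    have hne : a k ≠ a (k + 1) := fun h => by simpa using hinj _ (by omega) _ le_rfl h
    have hnotMem : ∀ v, k ≤ v → v ≤ k + 1 → a v ∉ (range k).image a := by
      intro v hkv hv hmem
      obtain ⟨u, hu, huv⟩ := mem_image.1 hmem
      rw [mem_range] at hu
      have := hinj u (by omega) v hv huv
      omega
    have ha' : Set.InjOn (Function.update a k (a (k + 1))) (Set.Iic k) := by
      intro u hu v hv huv
      simp only [Set.mem_Iic] at hu hv
      simp only [Function.update_apply] at huv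
      split_ifs at huv <;> (have := hinj _ (by omega) _ (by omega) huv; omega)
    have himage' : (range (k + 1)).image (Function.update a k (a (k + 1))) =
        insert (a (k + 1)) ((range k).image a) := by
      rw [range_add_one, image_insert, Function.update_self]
      congr 1
      exact image_congr fun u hu => Function.update_of_ne (mem_range.1 hu).ne _ _
    rw [setIntegral_simplexExp_succ hc hT hne, ih (ha.mono (Set.Iic_subset_Iic.2 k.le_succ)),
      ih ha', himage', range_add_one (n := k + 1), image_insert, range_add_one (n := k),
      image_insert,
      dividedDiff_insert_insert _ (hnotMem _ (by omega) le_rfl) (hnotMem _ le_rfl (by omega))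
        hne.symm]
    have := sub_ne_zero.2 hne
    field_simp
    ring

end OrderedSimplex

lemma gam_sub_gam_succ (n : ℕ) (R : ℕ → ℕ) {v : ℕ} (hv : 1 ≤ v) :
    gam n R v - gam n R (v + 1) = 1 + R v := by
  obtain ⟨m, rfl⟩ : ∃ m, v = m + 1 := ⟨v - 1, by omega⟩
  rw [gam, gam, Nat.add_sub_cancel, Nat.add_sub_cancel, sum_Icc_succ_top (by omega)]
  push_cast
  ring

lemma strictAnti_gam_succ (n : ℕ) (R : ℕ → ℕ) : StrictAnti fun v => gam n R (v + 1) :=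
  strictAnti_nat_of_succ_lt fun v => by
    have := gam_sub_gam_succ n R (Nat.le_add_left 1 v)
    have : (0 : ℝ) ≤ R (v + 1) := Nat.cast_nonneg _
    linarith

theorem mgf_integral_case_T_general (n j : ℕ) (R : ℕ → ℕ)
    (θ T : ℝ) (hT : 0 < T)
    (i : ℕ)
    (t s : ℝ) (ht : t / i < 1 / θ) (hs : s = 1 / θ - t / i) :
    ∫ z in {z : Fin j → ℝ | StrictMono z ∧ ∀ h, 0 < z h ∧ z h < T},
        Real.exp (-s * ((∑ h, z h * (1 + (R (h.1 + 1) : ℝ))) + T * gam n R (j + 1))) =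
      s ^ (-(j : ℤ)) *
        ∑ v ∈ Finset.range (j + 1),
          (-1 : ℝ) ^ v * Real.exp (-s * T * gam n R (j - v + 1)) /
            ((∏ h ∈ Finset.Icc 1 v, (gam n R (j + 1 - v) - gam n R (j + 1 - v + h))) *
              (∏ h ∈ Finset.Icc 1 (j - v), (gam n R h - gam n R (j - v + 1)))) := by
  have hs0 : s ≠ 0 := by rw [hs]; exact (sub_pos.2 ht).ne'
  have hinj := (strictAnti_gam_succ n R).injective
  have hcoef : ∀ h : Fin j, 1 + (R (h.1 + 1) : ℝ) = gam n R (h + 1) - gam n R (h + 1 + 1) :=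
    fun h => (gam_sub_gam_succ n R (Nat.le_add_left 1 h)).symm
  simp_rw [hcoef]
  refine (setIntegral_simplexExp (c := -s) (a := fun v => gam n R (v + 1)) (neg_ne_zero.2 hs0)
    hT.le hinj.injOn).trans ?_
  rw [dividedDiff_image_range_succ _ _ _ hinj.injOn, neg_pow s,
    mul_div_mul_left _ _ (pow_ne_zero _ (by norm_num)), zpow_neg, zpow_natCast, div_eq_inv_mul]

/-- The iterated integral over the ordered simplex `{0 < z₁ < ⋯ < z_j < T}` of
`exp(−s(Σ_{h=1}^{j} z_h (1 + R_h) + T γ_{j+1}))` equals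
`s^{−j} Σ_{v=0}^{j} (−1)^v e^{−s T γ_{j−v+1}} / [⋯]`; this is the computational content
of the conditional MGF of `θ̂₁` given `J = j`, `D₁ = i` when `Z_{k:m:n} < T < Z_{m:m:n}`. -/
theorem mgf_integral_case_T (n j : ℕ) (hn : 1 ≤ n) (hj : 1 ≤ j) (R : ℕ → ℕ)
    (hR : (∑ u ∈ Finset.Icc 1 j, R u) + j ≤ n)
    (θ T : ℝ) (hθ : 0 < θ) (hT : 0 < T)
    (i : ℕ) (hi1 : 1 ≤ i) (hij : i ≤ j)
    (t s : ℝ) (ht : t / i < 1 / θ) (hs : s = 1 / θ - t / i) :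
    ∫ z in {z : Fin j → ℝ | StrictMono z ∧ ∀ h, 0 < z h ∧ z h < T},
        Real.exp (-s * ((∑ h, z h * (1 + (R (h.1 + 1) : ℝ))) + T * gam n R (j + 1))) =
      s ^ (-(j : ℤ)) *
        ∑ v ∈ Finset.range (j + 1),
          (-1 : ℝ) ^ v * Real.exp (-s * T * gam n R (j - v + 1)) /
            ((∏ h ∈ Finset.Icc 1 v, (gam n R (j + 1 - v) - gam n R (j + 1 - v + h))) *
              (∏ h ∈ Finset.Icc 1 (j - v), (gam n R h - gam n R (j - v + 1)))) :=
  mgf_integral_case_T_general n j R θ T hT i t s ht hs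
end
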